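/- arXiv:2504.12164 — 2 statements merged into one kernel-verified Lean document; each statement's English description precedes it below -/
import Mathlib

section
/- Let Ω ⊆ ℝ² be open, α, β ∈ ℝ, let σ̃, φ̃ : ℝ×ℝ² → ℝ and u : ℝ×ℝ² → ℝ² be twice continuously differentiable on ℝ×Ω, and let σ̂ : ℝ² → ℝ be twice continuously differentiable on Ω. Assume that on ℝ×Ω: (i) 2∂_t σ̃ + 2u·∇σ̃ + σ̃ div u + 2u·∇σ̂ + σ̂ div u = 0, and (ii) 2∂_t u + 2(u·∇)u + σ̃∇σ̃ + σ̃∇σ̂ + σ̂∇σ̃ = −2αu + 2β∇φ̃. Define M := u·∇(∂_t σ̃) + div(∂_t(σ̃u)) + (∂_t u)·∇σ̃ + 2(∂_t u)·∇σ̂ and N := 2(u·∇)u + σ̃∇σ̃ + σ̃∇σ̂ + 2αu − 2β∇φ̃. Then on ℝ×Ω: 4∂²_t σ̃ − div(σ̂²∇σ̃) = −2M + div(σ̂N) − N·∇σ̂ − σ̂(∇σ̃·∇σ̂). -/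
/-- Partial derivative in the time variable of a function of `(t, x, y)`. -/
noncomputable def pt (f : ℝ → ℝ → ℝ → ℝ) : ℝ → ℝ → ℝ → ℝ :=
  fun t x y => deriv (fun s => f s x y) t

/-- Partial derivative in the first space variable of a function of `(t, x, y)`. -/
noncomputable def px (f : ℝ → ℝ → ℝ → ℝ) : ℝ → ℝ → ℝ → ℝ :=
  fun t x y => deriv (fun s => f t s y) x

/-- Partial derivative in the second space variable of a function of `(t, x, y)`. -/
noncomputable def py (f : ℝ → ℝ → ℝ → ℝ) : ℝ → ℝ → ℝ → ℝ :=
  fun t x y => deriv (fun s => f t x s) y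

/-- Partial derivative in the first variable of a function of `(x, y)`. -/
noncomputable def qx (f : ℝ → ℝ → ℝ) : ℝ → ℝ → ℝ :=
  fun x y => deriv (fun s => f s y) x

/-- Partial derivative in the second variable of a function of `(x, y)`. -/
noncomputable def qy (f : ℝ → ℝ → ℝ) : ℝ → ℝ → ℝ :=
  fun x y => deriv (fun s => f x s) y

/-!
By (ii), `N = -2∂ₜu - σ̂∇σ̃`, so `div(σ̂N) - N·∇σ̂ - σ̂∇σ̃·∇σ̂ = -div(σ̂²∇σ̃) - 2σ̂ div ∂ₜu`
and the wave equation reduces to `2∂ₜ²σ̃ + M + σ̂ div ∂ₜu = 0`. Expanding `div ∂ₜ(σ̃u)` by the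
product rule and commuting `∂ₜ` with `∂ₓ, ∂_y` (Schwarz), this is exactly the time derivative
of (i).
-/

open Topology

def uncurry3 (f : ℝ → ℝ → ℝ → ℝ) (q : ℝ × ℝ × ℝ) : ℝ := f q.1 q.2.1 q.2.2

section Lines

variable {f : ℝ → ℝ → ℝ → ℝ} {g : ℝ → ℝ → ℝ} {t x y : ℝ}

theorem hasDerivAt_pt (h : DifferentiableAt ℝ (uncurry3 f) (t, x, y)) :
    HasDerivAt (fun s => f s x y) (pt f t x y) t :=
  (h.comp (f := fun s => (s, x, y)) t (by fun_prop)).hasDerivAt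

theorem hasDerivAt_px (h : DifferentiableAt ℝ (uncurry3 f) (t, x, y)) :
    HasDerivAt (fun s => f t s y) (px f t x y) x :=
  (h.comp (f := fun s => (t, s, y)) x (by fun_prop)).hasDerivAt

theorem hasDerivAt_py (h : DifferentiableAt ℝ (uncurry3 f) (t, x, y)) :
    HasDerivAt (fun s => f t x s) (py f t x y) y :=
  (h.comp (f := fun s => (t, x, s)) y (by fun_prop)).hasDerivAt

theorem hasDerivAt_qx (h : DifferentiableAt ℝ (Function.uncurry g) (x, y)) :
    HasDerivAt (fun s => g s y) (qx g x y) x :=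
  (h.comp (f := fun s => (s, y)) x (by fun_prop)).hasDerivAt

theorem hasDerivAt_qy (h : DifferentiableAt ℝ (Function.uncurry g) (x, y)) :
    HasDerivAt (fun s => g x s) (qy g x y) y :=
  (h.comp (f := fun s => (x, s)) y (by fun_prop)).hasDerivAt

theorem pt_eq_fderiv (h : DifferentiableAt ℝ (uncurry3 f) (t, x, y)) :
    pt f t x y = fderiv ℝ (uncurry3 f) (t, x, y) (1, 0, 0) :=
  (h.hasFDerivAt.comp_hasDerivAt (f := fun s => (s, x, y)) t
    ((hasDerivAt_id t).prodMk (hasDerivAt_const t (x, y)))).deriv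

theorem px_eq_fderiv (h : DifferentiableAt ℝ (uncurry3 f) (t, x, y)) :
    px f t x y = fderiv ℝ (uncurry3 f) (t, x, y) (0, 1, 0) :=
  (h.hasFDerivAt.comp_hasDerivAt (f := fun s => (t, s, y)) x ((hasDerivAt_const x t).prodMk
    ((hasDerivAt_id x).prodMk (hasDerivAt_const x y)))).deriv

theorem py_eq_fderiv (h : DifferentiableAt ℝ (uncurry3 f) (t, x, y)) :
    py f t x y = fderiv ℝ (uncurry3 f) (t, x, y) (0, 0, 1) :=
  (h.hasFDerivAt.comp_hasDerivAt (f := fun s => (t, x, s)) y ((hasDerivAt_const y t).prodMk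
    ((hasDerivAt_const y x).prodMk (hasDerivAt_id y)))).deriv

end Lines

section Regularity

variable {f : ℝ → ℝ → ℝ → ℝ} {U : Set (ℝ × ℝ × ℝ)} {m n : WithTop ℕ∞}

theorem eqOn_uncurry3_pt (hU : IsOpen U) (hf : DifferentiableOn ℝ (uncurry3 f) U) :
    Set.EqOn (uncurry3 (pt f)) (fun q => fderiv ℝ (uncurry3 f) q (1, 0, 0)) U :=
  fun _ hq => pt_eq_fderiv (hf.differentiableAt (hU.mem_nhds hq))

theorem eqOn_uncurry3_px (hU : IsOpen U) (hf : DifferentiableOn ℝ (uncurry3 f) U) :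
    Set.EqOn (uncurry3 (px f)) (fun q => fderiv ℝ (uncurry3 f) q (0, 1, 0)) U :=
  fun _ hq => px_eq_fderiv (hf.differentiableAt (hU.mem_nhds hq))

theorem eqOn_uncurry3_py (hU : IsOpen U) (hf : DifferentiableOn ℝ (uncurry3 f) U) :
    Set.EqOn (uncurry3 (py f)) (fun q => fderiv ℝ (uncurry3 f) q (0, 0, 1)) U :=
  fun _ hq => py_eq_fderiv (hf.differentiableAt (hU.mem_nhds hq))

theorem ContDiffOn.uncurry3_pt (hU : IsOpen U) (hf : ContDiffOn ℝ n (uncurry3 f) U)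
    (hmn : m + 1 ≤ n) : ContDiffOn ℝ m (uncurry3 (pt f)) U :=
  ((hf.fderiv_of_isOpen hU hmn).clm_apply contDiffOn_const).congr
    (eqOn_uncurry3_pt hU (hf.differentiableOn (by rintro rfl; simp at hmn)))

theorem ContDiffOn.uncurry3_px (hU : IsOpen U) (hf : ContDiffOn ℝ n (uncurry3 f) U)
    (hmn : m + 1 ≤ n) : ContDiffOn ℝ m (uncurry3 (px f)) U :=
  ((hf.fderiv_of_isOpen hU hmn).clm_apply contDiffOn_const).congr
    (eqOn_uncurry3_px hU (hf.differentiableOn (by rintro rfl; simp at hmn)))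

theorem ContDiffOn.uncurry3_py (hU : IsOpen U) (hf : ContDiffOn ℝ n (uncurry3 f) U)
    (hmn : m + 1 ≤ n) : ContDiffOn ℝ m (uncurry3 (py f)) U :=
  ((hf.fderiv_of_isOpen hU hmn).clm_apply contDiffOn_const).congr
    (eqOn_uncurry3_py hU (hf.differentiableOn (by rintro rfl; simp at hmn)))

end Regularity

section Symmetry

variable {E : Type*} [NormedAddCommGroup E] [NormedSpace ℝ E] {F G H : E → ℝ} {U : Set E}
  {q v w : E}

theorem fderiv_apply_comm_of_eqOn (hU : IsOpen U) (hF : ContDiffOn ℝ 2 F U) (hq : q ∈ U)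
    (hG : Set.EqOn G (fun p => fderiv ℝ F p v) U)
    (hH : Set.EqOn H (fun p => fderiv ℝ F p w) U) :
    fderiv ℝ G q w = fderiv ℝ H q v := by
  have hF' : DifferentiableAt ℝ (fderiv ℝ F) q :=
    ((hF.fderiv_of_isOpen hU le_rfl).differentiableOn one_ne_zero).differentiableAt
      (hU.mem_nhds hq)
  rw [(hG.eventuallyEq_of_mem (hU.mem_nhds hq)).fderiv_eq,
    (hH.eventuallyEq_of_mem (hU.mem_nhds hq)).fderiv_eq,
    fderiv_clm_apply hF' (differentiableAt_const v),
    fderiv_clm_apply hF' (differentiableAt_const w)]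
  simpa using ((hF.contDiffAt (hU.mem_nhds hq)).isSymmSndFDerivAt (by simp)).eq w v

end Symmetry

section MixedPartials

variable {f g : ℝ → ℝ → ℝ → ℝ} {U : Set (ℝ × ℝ × ℝ)} {t x y : ℝ}

theorem px_pt_eq_pt_px (hU : IsOpen U) (hf : ContDiffOn ℝ 2 (uncurry3 f) U)
    (hq : (t, x, y) ∈ U) :
    px (pt f) t x y = pt (px f) t x y := by
  have hd := hf.differentiableOn two_ne_zero
  have hpt := (hf.uncurry3_pt hU (m := 1) (by norm_num)).differentiableOn one_ne_zero
  have hpx := (hf.uncurry3_px hU (m := 1) (by norm_num)).differentiableOn one_ne_zero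
  exact (eqOn_uncurry3_px hU hpt hq).trans <|
    (fderiv_apply_comm_of_eqOn hU hf hq (eqOn_uncurry3_pt hU hd) (eqOn_uncurry3_px hU hd)).trans
      (eqOn_uncurry3_pt hU hpx hq).symm

theorem py_pt_eq_pt_py (hU : IsOpen U) (hf : ContDiffOn ℝ 2 (uncurry3 f) U)
    (hq : (t, x, y) ∈ U) :
    py (pt f) t x y = pt (py f) t x y := by
  have hd := hf.differentiableOn two_ne_zero
  have hpt := (hf.uncurry3_pt hU (m := 1) (by norm_num)).differentiableOn one_ne_zero
  have hpy := (hf.uncurry3_py hU (m := 1) (by norm_num)).differentiableOn one_ne_zero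
  exact (eqOn_uncurry3_py hU hpt hq).trans <|
    (fderiv_apply_comm_of_eqOn hU hf hq (eqOn_uncurry3_pt hU hd) (eqOn_uncurry3_py hU hd)).trans
      (eqOn_uncurry3_pt hU hpy hq).symm

theorem px_pt_mul (hU : IsOpen U) (hf : ContDiffOn ℝ 2 (uncurry3 f) U)
    (hg : ContDiffOn ℝ 2 (uncurry3 g) U) (hq : (t, x, y) ∈ U) :
    px (pt fun a b c => f a b c * g a b c) t x y =
      px (pt f) t x y * g t x y + pt f t x y * px g t x y +
        (px f t x y * pt g t x y + f t x y * px (pt g) t x y) := by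
  have hdf := hf.differentiableOn two_ne_zero
  have hdg := hg.differentiableOn two_ne_zero
  have hpf := (hf.uncurry3_pt hU (m := 1) (by norm_num)).differentiableOn one_ne_zero
  have hpg := (hg.uncurry3_pt hU (m := 1) (by norm_num)).differentiableOn one_ne_zero
  have hV := hU.mem_nhds hq
  refine ((((hasDerivAt_px (hpf.differentiableAt hV)).mul
    (hasDerivAt_px (hdg.differentiableAt hV))).add
    ((hasDerivAt_px (hdf.differentiableAt hV)).mul
      (hasDerivAt_px (hpg.differentiableAt hV)))).congr_of_eventuallyEq ?_).deriv
  filter_upwards [(by fun_prop : ContinuousAt (fun s => (t, s, y)) x).eventually_mem hV]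
    with s hs
  exact ((hasDerivAt_pt (hdf.differentiableAt (hU.mem_nhds hs))).mul
    (hasDerivAt_pt (hdg.differentiableAt (hU.mem_nhds hs)))).deriv

theorem py_pt_mul (hU : IsOpen U) (hf : ContDiffOn ℝ 2 (uncurry3 f) U)
    (hg : ContDiffOn ℝ 2 (uncurry3 g) U) (hq : (t, x, y) ∈ U) :
    py (pt fun a b c => f a b c * g a b c) t x y =
      py (pt f) t x y * g t x y + pt f t x y * py g t x y +
        (py f t x y * pt g t x y + f t x y * py (pt g) t x y) := by
  have hdf := hf.differentiableOn two_ne_zero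
  have hdg := hg.differentiableOn two_ne_zero
  have hpf := (hf.uncurry3_pt hU (m := 1) (by norm_num)).differentiableOn one_ne_zero
  have hpg := (hg.uncurry3_pt hU (m := 1) (by norm_num)).differentiableOn one_ne_zero
  have hV := hU.mem_nhds hq
  refine ((((hasDerivAt_py (hpf.differentiableAt hV)).mul
    (hasDerivAt_py (hdg.differentiableAt hV))).add
    ((hasDerivAt_py (hdf.differentiableAt hV)).mul
      (hasDerivAt_py (hpg.differentiableAt hV)))).congr_of_eventuallyEq ?_).deriv
  filter_upwards [(by fun_prop : ContinuousAt (fun s => (t, x, s)) y).eventually_mem hV]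
    with s hs
  exact ((hasDerivAt_pt (hdf.differentiableAt (hU.mem_nhds hs))).mul
    (hasDerivAt_pt (hdg.differentiableAt (hU.mem_nhds hs)))).deriv

end MixedPartials

-- `a`, `b`, `c` stand for the time-independent `∂ₓσ̂`, `∂_yσ̂`, `σ̂` in (i).
theorem pt_continuity_eq_zero {σ u₁ u₂ : ℝ → ℝ → ℝ → ℝ} {U : Set (ℝ × ℝ × ℝ)}
    {t x y : ℝ} (hU : IsOpen U) (hσ : ContDiffOn ℝ 2 (uncurry3 σ) U)
    (hu₁ : ContDiffOn ℝ 2 (uncurry3 u₁) U) (hu₂ : ContDiffOn ℝ 2 (uncurry3 u₂) U)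
    (hq : (t, x, y) ∈ U) (a b c : ℝ)
    (h : ∀ s, 2 * pt σ s x y + 2 * (u₁ s x y * px σ s x y + u₂ s x y * py σ s x y) +
      σ s x y * (px u₁ s x y + py u₂ s x y) + 2 * (u₁ s x y * a + u₂ s x y * b) +
      c * (px u₁ s x y + py u₂ s x y) = 0) :
    2 * pt (pt σ) t x y +
      2 * (pt u₁ t x y * px σ t x y + u₁ t x y * px (pt σ) t x y +
        (pt u₂ t x y * py σ t x y + u₂ t x y * py (pt σ) t x y)) +
      (pt σ t x y * (px u₁ t x y + py u₂ t x y) +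
        σ t x y * (px (pt u₁) t x y + py (pt u₂) t x y)) +
      2 * (pt u₁ t x y * a + pt u₂ t x y * b) +
      c * (px (pt u₁) t x y + py (pt u₂) t x y) = 0 := by
  have h12 : (1 : WithTop ℕ∞) + 1 ≤ 2 := by norm_num
  have d1 {f : ℝ → ℝ → ℝ → ℝ} (hf : ContDiffOn ℝ 1 (uncurry3 f) U) :
      DifferentiableAt ℝ (uncurry3 f) (t, x, y) :=
    (hf.differentiableOn one_ne_zero).differentiableAt (hU.mem_nhds hq)
  have d2 {f : ℝ → ℝ → ℝ → ℝ} (hf : ContDiffOn ℝ 2 (uncurry3 f) U) :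
      DifferentiableAt ℝ (uncurry3 f) (t, x, y) :=
    (hf.differentiableOn two_ne_zero).differentiableAt (hU.mem_nhds hq)
  have hu₁' := hasDerivAt_pt (d2 hu₁)
  have hu₂' := hasDerivAt_pt (d2 hu₂)
  have hdiv := (hasDerivAt_pt (d1 (hu₁.uncurry3_px hU h12))).add
    (hasDerivAt_pt (d1 (hu₂.uncurry3_py hU h12)))
  have hderiv := (((((hasDerivAt_pt (d1 (hσ.uncurry3_pt hU h12))).const_mul 2).add
    (((hu₁'.mul (hasDerivAt_pt (d1 (hσ.uncurry3_px hU h12)))).add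
      (hu₂'.mul (hasDerivAt_pt (d1 (hσ.uncurry3_py hU h12))))).const_mul 2)).add
    ((hasDerivAt_pt (d2 hσ)).mul hdiv)).add
    (((hu₁'.mul_const a).add (hu₂'.mul_const b)).const_mul 2)).add (hdiv.const_mul c)
  have hzero := hderiv.unique ((hasDerivAt_const t 0).congr_of_eventuallyEq (.of_forall h))
  rwa [← px_pt_eq_pt_px hU hσ hq, ← py_pt_eq_pt_py hU hσ hq, ← px_pt_eq_pt_px hU hu₁ hq,
    ← py_pt_eq_pt_py hU hu₂ hq] at hzero

-- One coordinate of the reduction: `g = σ̂`, `p = ∂ᵢσ̃`, `w = ∂ₜuᵢ`, `n = Nᵢ`.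
theorem deriv_mul_sub_eq_neg_deriv_sq_mul {g p w n : ℝ → ℝ} {g' p' w' x : ℝ}
    (hg : HasDerivAt g g' x) (hp : HasDerivAt p p' x) (hw : HasDerivAt w w' x)
    (hn : n =ᶠ[𝓝 x] fun s => -2 * w s - g s * p s) :
    deriv (fun s => g s * n s) x - n x * g' - g x * (p x * g') =
      -deriv (fun s => g s ^ 2 * p s) x - 2 * g x * w' := by
  have hgn : HasDerivAt (fun s => g s * n s)
      (g' * (-2 * w x - g x * p x) + g x * (-2 * w' - (g' * p x + g x * p'))) x :=
    (hg.mul ((hw.const_mul (-2)).sub (hg.mul hp))).congr_of_eventuallyEq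
      (hn.mono fun s hs => by simp only [Pi.mul_apply, Pi.sub_apply, hs])
  have hg2p : HasDerivAt (fun s => g s ^ 2 * p s) _ x := (hg.pow 2).mul hp
  rw [hgn.deriv, hg2p.deriv, hn.eq_of_nhds, Pi.pow_apply]
  ring

theorem perturbation_wave_equation_general
    (Ω : Set (ℝ × ℝ)) (hΩ : IsOpen Ω) (α β : ℝ)
    (σt φt : ℝ → ℝ → ℝ → ℝ) (u₁ u₂ : ℝ → ℝ → ℝ → ℝ) (σh : ℝ → ℝ → ℝ)
    (hσt : ContDiffOn ℝ 2 (fun q : ℝ × ℝ × ℝ => σt q.1 q.2.1 q.2.2)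
      {q : ℝ × ℝ × ℝ | q.2 ∈ Ω})
    (hu₁ : ContDiffOn ℝ 2 (fun q : ℝ × ℝ × ℝ => u₁ q.1 q.2.1 q.2.2)
      {q : ℝ × ℝ × ℝ | q.2 ∈ Ω})
    (hu₂ : ContDiffOn ℝ 2 (fun q : ℝ × ℝ × ℝ => u₂ q.1 q.2.1 q.2.2)
      {q : ℝ × ℝ × ℝ | q.2 ∈ Ω})
    (hσh : ContDiffOn ℝ 2 (fun p : ℝ × ℝ => σh p.1 p.2) Ω)
    -- (i) transformed continuity equation
    (hi : ∀ (t x y : ℝ), (x, y) ∈ Ω →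
      2 * pt σt t x y + 2 * (u₁ t x y * px σt t x y + u₂ t x y * py σt t x y) +
        σt t x y * (px u₁ t x y + py u₂ t x y) +
        2 * (u₁ t x y * qx σh x y + u₂ t x y * qy σh x y) +
        σh x y * (px u₁ t x y + py u₂ t x y) = 0)
    -- (ii) transformed momentum equation
    (hii₁ : ∀ (t x y : ℝ), (x, y) ∈ Ω →
      2 * pt u₁ t x y + 2 * (u₁ t x y * px u₁ t x y + u₂ t x y * py u₁ t x y) +
        σt t x y * px σt t x y + σt t x y * qx σh x y + σh x y * px σt t x y
        = -2 * α * u₁ t x y + 2 * β * px φt t x y)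
    (hii₂ : ∀ (t x y : ℝ), (x, y) ∈ Ω →
      2 * pt u₂ t x y + 2 * (u₁ t x y * px u₂ t x y + u₂ t x y * py u₂ t x y) +
        σt t x y * py σt t x y + σt t x y * qy σh x y + σh x y * py σt t x y
        = -2 * α * u₂ t x y + 2 * β * py φt t x y)
    (M N₁ N₂ : ℝ → ℝ → ℝ → ℝ)
    (hM : ∀ t x y : ℝ, M t x y =
      u₁ t x y * px (pt σt) t x y + u₂ t x y * py (pt σt) t x y +
      (px (pt (fun a b c => σt a b c * u₁ a b c)) t x y +
        py (pt (fun a b c => σt a b c * u₂ a b c)) t x y) +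
      (pt u₁ t x y * px σt t x y + pt u₂ t x y * py σt t x y) +
      2 * (pt u₁ t x y * qx σh x y + pt u₂ t x y * qy σh x y))
    (hN₁ : ∀ t x y : ℝ, N₁ t x y =
      2 * (u₁ t x y * px u₁ t x y + u₂ t x y * py u₁ t x y) +
        σt t x y * px σt t x y + σt t x y * qx σh x y +
        2 * α * u₁ t x y - 2 * β * px φt t x y)
    (hN₂ : ∀ t x y : ℝ, N₂ t x y =
      2 * (u₁ t x y * px u₂ t x y + u₂ t x y * py u₂ t x y) +
        σt t x y * py σt t x y + σt t x y * qy σh x y +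
        2 * α * u₂ t x y - 2 * β * py φt t x y) :
    ∀ (t x y : ℝ), (x, y) ∈ Ω →
      4 * pt (pt σt) t x y -
        (deriv (fun s => (σh s y) ^ 2 * px σt t s y) x +
         deriv (fun s => (σh x s) ^ 2 * py σt t x s) y)
      = -2 * M t x y +
        (deriv (fun s => σh s y * N₁ t s y) x +
         deriv (fun s => σh x s * N₂ t x s) y) -
        (N₁ t x y * qx σh x y + N₂ t x y * qy σh x y) -
        σh x y * (px σt t x y * qx σh x y + py σt t x y * qy σh x y) := by
  intro t x y hxy
  set U := {q : ℝ × ℝ × ℝ | q.2 ∈ Ω}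
  have hU : IsOpen U := hΩ.preimage continuous_snd
  have h12 : (1 : WithTop ℕ∞) + 1 ≤ 2 := by norm_num
  have d1 {f : ℝ → ℝ → ℝ → ℝ} (hf : ContDiffOn ℝ 1 (uncurry3 f) U) :
      DifferentiableAt ℝ (uncurry3 f) (t, x, y) :=
    (hf.differentiableOn one_ne_zero).differentiableAt (hU.mem_nhds hxy)
  have hσh' := (hσh.differentiableOn two_ne_zero).differentiableAt (hΩ.mem_nhds hxy)
  have hdivx := deriv_mul_sub_eq_neg_deriv_sq_mul (hasDerivAt_qx hσh')
    (hasDerivAt_px (d1 (hσt.uncurry3_px hU h12))) (hasDerivAt_px (d1 (hu₁.uncurry3_pt hU h12)))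
    (n := fun s => N₁ t s y) <| by
      filter_upwards [(by fun_prop : ContinuousAt (fun s => (s, y)) x).eventually_mem
        (hΩ.mem_nhds hxy)] with s hs
      linarith [hii₁ t s y hs, hN₁ t s y]
  have hdivy := deriv_mul_sub_eq_neg_deriv_sq_mul (hasDerivAt_qy hσh')
    (hasDerivAt_py (d1 (hσt.uncurry3_py hU h12))) (hasDerivAt_py (d1 (hu₂.uncurry3_pt hU h12)))
    (n := fun s => N₂ t x s) <| by
      filter_upwards [(by fun_prop : ContinuousAt (fun s => (x, s)) y).eventually_mem
        (hΩ.mem_nhds hxy)] with s hs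
      linarith [hii₂ t x s hs, hN₂ t x s]
  have hcont := pt_continuity_eq_zero (t := t) hU hσt hu₁ hu₂ hxy _ _ _ (hi · x y hxy)
  rw [hM, px_pt_mul hU hσt hu₁ hxy, py_pt_mul hU hσt hu₂ hxy]
  linear_combination 2 * hcont - hdivx - hdivy

/-- The non-homogeneous wave equation with non-constant speed
`4∂²_tσ̃ - div(σ̂²∇σ̃) = -2M + div(σ̂N) - N·∇σ̂ - σ̂(∇σ̃·∇σ̂)` satisfied by the density
perturbation of the sound-speed-transformed vasculogenesis model with quadratic
pressure. -/
theorem perturbation_wave_equation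
    (Ω : Set (ℝ × ℝ)) (hΩ : IsOpen Ω) (α β : ℝ)
    (σt φt : ℝ → ℝ → ℝ → ℝ) (u₁ u₂ : ℝ → ℝ → ℝ → ℝ) (σh : ℝ → ℝ → ℝ)
    (hσt : ContDiffOn ℝ 2 (fun q : ℝ × ℝ × ℝ => σt q.1 q.2.1 q.2.2)
      {q : ℝ × ℝ × ℝ | q.2 ∈ Ω})
    (hφt : ContDiffOn ℝ 2 (fun q : ℝ × ℝ × ℝ => φt q.1 q.2.1 q.2.2)
      {q : ℝ × ℝ × ℝ | q.2 ∈ Ω})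
    (hu₁ : ContDiffOn ℝ 2 (fun q : ℝ × ℝ × ℝ => u₁ q.1 q.2.1 q.2.2)
      {q : ℝ × ℝ × ℝ | q.2 ∈ Ω})
    (hu₂ : ContDiffOn ℝ 2 (fun q : ℝ × ℝ × ℝ => u₂ q.1 q.2.1 q.2.2)
      {q : ℝ × ℝ × ℝ | q.2 ∈ Ω})
    (hσh : ContDiffOn ℝ 2 (fun p : ℝ × ℝ => σh p.1 p.2) Ω)
    -- (i) transformed continuity equation
    (hi : ∀ (t x y : ℝ), (x, y) ∈ Ω →
      2 * pt σt t x y + 2 * (u₁ t x y * px σt t x y + u₂ t x y * py σt t x y) +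
        σt t x y * (px u₁ t x y + py u₂ t x y) +
        2 * (u₁ t x y * qx σh x y + u₂ t x y * qy σh x y) +
        σh x y * (px u₁ t x y + py u₂ t x y) = 0)
    -- (ii) transformed momentum equation
    (hii₁ : ∀ (t x y : ℝ), (x, y) ∈ Ω →
      2 * pt u₁ t x y + 2 * (u₁ t x y * px u₁ t x y + u₂ t x y * py u₁ t x y) +
        σt t x y * px σt t x y + σt t x y * qx σh x y + σh x y * px σt t x y
        = -2 * α * u₁ t x y + 2 * β * px φt t x y)
    (hii₂ : ∀ (t x y : ℝ), (x, y) ∈ Ω →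
      2 * pt u₂ t x y + 2 * (u₁ t x y * px u₂ t x y + u₂ t x y * py u₂ t x y) +
        σt t x y * py σt t x y + σt t x y * qy σh x y + σh x y * py σt t x y
        = -2 * α * u₂ t x y + 2 * β * py φt t x y)
    (M N₁ N₂ : ℝ → ℝ → ℝ → ℝ)
    (hM : ∀ t x y : ℝ, M t x y =
      u₁ t x y * px (pt σt) t x y + u₂ t x y * py (pt σt) t x y +
      (px (pt (fun a b c => σt a b c * u₁ a b c)) t x y +
        py (pt (fun a b c => σt a b c * u₂ a b c)) t x y) +
      (pt u₁ t x y * px σt t x y + pt u₂ t x y * py σt t x y) +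
      2 * (pt u₁ t x y * qx σh x y + pt u₂ t x y * qy σh x y))
    (hN₁ : ∀ t x y : ℝ, N₁ t x y =
      2 * (u₁ t x y * px u₁ t x y + u₂ t x y * py u₁ t x y) +
        σt t x y * px σt t x y + σt t x y * qx σh x y +
        2 * α * u₁ t x y - 2 * β * px φt t x y)
    (hN₂ : ∀ t x y : ℝ, N₂ t x y =
      2 * (u₁ t x y * px u₂ t x y + u₂ t x y * py u₂ t x y) +
        σt t x y * py σt t x y + σt t x y * qy σh x y +
        2 * α * u₂ t x y - 2 * β * py φt t x y) :
    ∀ (t x y : ℝ), (x, y) ∈ Ω →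
      4 * pt (pt σt) t x y -
        (deriv (fun s => (σh s y) ^ 2 * px σt t s y) x +
         deriv (fun s => (σh x s) ^ 2 * py σt t x s) y)
      = -2 * M t x y +
        (deriv (fun s => σh s y * N₁ t s y) x +
         deriv (fun s => σh x s * N₂ t x s) y) -
        (N₁ t x y * qx σh x y + N₂ t x y * qy σh x y) -
        σh x y * (px σt t x y * qx σh x y + py σt t x y * qy σh x y) :=
  perturbation_wave_equation_general Ω hΩ α β σt φt u₁ u₂ σh hσt hu₁ hu₂ hσh hi hii₁ hii₂ M N₁ N₂ hM
    hN₁ hN₂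
end

section
/- Let κ > 0, σ̂ > 0, α, β ∈ ℝ be constants, and let σ̃, φ̃ : ℝ×ℝ² → ℝ and u = (u₁,u₂) : ℝ×ℝ² → ℝ² be differentiable at every point of ℝ×ℝ². Assume that for all t ∈ ℝ and x ∈ [0,1]: (i) u₂(t,x,0) = 0; (ii) ∂_y φ̃(t,x,0) = 0; (iii) σ̃(t,x,0) + σ̂ > 0; and (iv) the second component of the momentum equation holds at (t,x,0): ∂_t u₂ + u₁ ∂_x u₂ + u₂ ∂_y u₂ + κ(σ̃ + σ̂) ∂_y σ̃ = −α u₂ + β ∂_y φ̃. Then ∂_y σ̃(t,x,0) = 0 for all t ∈ ℝ and all x ∈ (0,1). -/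
/-- The hidden Neumann condition for the density perturbation on the bottom edge of the
unit square: the normal component of the transformed momentum equation, together with
`u₂ = 0` and `∂_y φ̃ = 0` on the edge, forces `∂_y σ̃ = 0` there. -/
theorem hidden_neumann_condition
    (κ σh α β : ℝ) (hκ : 0 < κ) (hσh : 0 < σh)
    (σt φt u₁ u₂ : ℝ → ℝ → ℝ → ℝ)
    (hσtd : ∀ q : ℝ × ℝ × ℝ, DifferentiableAt ℝ
      (fun p : ℝ × ℝ × ℝ => σt p.1 p.2.1 p.2.2) q)
    (hφtd : ∀ q : ℝ × ℝ × ℝ, DifferentiableAt ℝ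
      (fun p : ℝ × ℝ × ℝ => φt p.1 p.2.1 p.2.2) q)
    (hu₁d : ∀ q : ℝ × ℝ × ℝ, DifferentiableAt ℝ
      (fun p : ℝ × ℝ × ℝ => u₁ p.1 p.2.1 p.2.2) q)
    (hu₂d : ∀ q : ℝ × ℝ × ℝ, DifferentiableAt ℝ
      (fun p : ℝ × ℝ × ℝ => u₂ p.1 p.2.1 p.2.2) q)
    (hbc : ∀ t : ℝ, ∀ x ∈ Set.Icc (0:ℝ) 1, u₂ t x 0 = 0)
    (hneu : ∀ t : ℝ, ∀ x ∈ Set.Icc (0:ℝ) 1, py φt t x 0 = 0)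
    (hpos : ∀ t : ℝ, ∀ x ∈ Set.Icc (0:ℝ) 1, 0 < σt t x 0 + σh)
    (hmom : ∀ t : ℝ, ∀ x ∈ Set.Icc (0:ℝ) 1,
      pt u₂ t x 0 + u₁ t x 0 * px u₂ t x 0 + u₂ t x 0 * py u₂ t x 0 +
        κ * (σt t x 0 + σh) * py σt t x 0 = -α * u₂ t x 0 + β * py φt t x 0) :
    ∀ t : ℝ, ∀ x ∈ Set.Ioo (0:ℝ) 1, py σt t x 0 = 0 := by
  intro t x hx
  have hxI : x ∈ Set.Icc (0:ℝ) 1 := Set.Ioo_subset_Icc_self hx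
  have hu0 : u₂ t x 0 = 0 := hbc t x hxI
  have hpt : pt u₂ t x 0 = 0 := by
    have : (fun s => u₂ s x 0) = fun _ => (0:ℝ) := funext fun s => hbc s x hxI
    simp [pt, this]
  have hpx : px u₂ t x 0 = 0 := by
    have hev : (fun s => u₂ t s 0) =ᶠ[nhds x] fun _ => (0:ℝ) := by
      filter_upwards [Ioo_mem_nhds hx.1 hx.2] with s hs
      exact hbc t s (Set.Ioo_subset_Icc_self hs)
    simp [px, hev.deriv_eq]
  have hm := hmom t x hxI
  rw [hpt, hpx, hu0, hneu t x hxI] at hm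
  have hne : κ * (σt t x 0 + σh) ≠ 0 :=
    ne_of_gt (mul_pos hκ (hpos t x hxI))
  have hm' : κ * (σt t x 0 + σh) * py σt t x 0 = 0 := by linarith
  exact (mul_eq_zero.mp hm').resolve_left hne
end
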